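/- Let m≥4, q even, π a permutation of {0,…,m−3}, g=Σ_{α=0}^{m−4}x_{π(α)}x_{π(α+1)}, and G=(q/2)(x̄_{m−1}x_{m−2}·g + x_{m−1}x̄_{m−2}·(g+x_{π(0)}+m−2))+c with x̄=1−x. Set G₁=G+(q/2)x_{m−1}x_{m−2} and G₂=G+(q/2)x_{π(m−3)}(x_{m−1}+x_{m−2}). Then the pair (Ψ_{2^{m−2}−1}(G₁), Ψ_{2^{m−2}−1}(G₂)) of length-(2^{m−1}+2) sequences is a (2^{m−1}+2, 2^{π(m−3)}+1)-CZCP. -/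

import Mathlib

open Finset Complex

/-- ω = exp(2πi/q). -/
noncomputable def omegaq (q : ℕ) : ℂ := Complex.exp (2 * Real.pi * Complex.I / q)

/-- Aperiodic cross-correlation of two length-`N` complex sequences at shift `τ`. -/
noncomputable def acorr (N : ℕ) (x y : ℕ → ℂ) (τ : ℕ) : ℂ :=
  ∑ i ∈ Finset.range (N - τ), x i * (starRingEnd ℂ) (y (i + τ))

/-- `k`-th binary digit of `i`. -/
def bit (i k : ℕ) : ℕ := (i / 2 ^ k) % 2

/-!
Put `n = 2^{m-2}`, `p = π (m-3)`, and let `P = g` be the quadratic form of the path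
`π 0, …, π (m-3)` on the digits of `k < n`. Because `ω^{q/2} = -1`, up to the unimodular factor
`ω^c` the two sequences are the `±1` sequences `a = (1, A, B, -1)` and `b = (1, A', B', 1)` with
`A = (-1)^P`, `B = (-1)^(P + x_{π 0} + m - 2)`, `A' = A (-1)^{x_p}`, `B' = B (-1)^{x_p}`.

The digit `x_p` vanishes on the first `2^p` indices of a block and equals `1` on its last `2^p`,
so `b` agrees with `a` on its first `2^p + 1` entries and with `-a` on its last `2^p + 1` ones;
this kills every term of the correlations at shifts `τ ≥ N - Z`.

For `1 ≤ τ ≤ 2^p + 1` the autocorrelation sum splits into three parts. The `A`-`A` and `B`-`B`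
parts together form the autocorrelation of the complementary set
`{P, P + x_p, P + x_{π 0}, P + x_{π 0} + x_p}`, which vanishes by Golay's involution. In the
`A`-`B` part `x_p` takes different values at the two ends of each term, which therefore vanishes,
except for two cancelling terms when `τ = 2^p + 1`. The two boundary terms cancel by the complement
identity `P (n - 1 - w) ≡ P w + x_{π 0} w + x_p w + (m - 3) (mod 2)`.
-/

lemma bit_eq_toNat_testBit (i k : ℕ) : bit i k = (i.testBit k).toNat :=
  (Nat.toNat_testBit i k).symm

lemma bit_eq_bit_iff {i j k l : ℕ} : bit i k = bit j l ↔ i.testBit k = j.testBit l := by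
  rw [bit_eq_toNat_testBit, bit_eq_toNat_testBit]
  cases i.testBit k <;> cases j.testBit l <;> simp

lemma bit_le_one (i k : ℕ) : bit i k ≤ 1 := by
  rw [bit_eq_toNat_testBit]; exact Bool.toNat_le _

lemma bit_of_lt {i k : ℕ} (h : i < 2 ^ k) : bit i k = 0 := by
  rw [bit_eq_toNat_testBit, Nat.testBit_lt_two_pow h, Bool.toNat_false]

lemma bit_two_pow (p t : ℕ) : bit (2 ^ p) t = if t = p then 1 else 0 := by
  rw [bit_eq_toNat_testBit, Nat.testBit_two_pow]; grind

lemma bit_two_pow_mul_add {s k : ℕ} (c : ℕ) (hk : k < 2 ^ s) (t : ℕ) :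
    bit (2 ^ s * c + k) t = if t < s then bit k t else bit c (t - s) := by
  simp only [bit_eq_toNat_testBit, Nat.testBit_two_pow_mul_add c hk]; split_ifs <;> rfl

lemma bit_two_pow_sub_one_sub {s k t : ℕ} (hk : k < 2 ^ s) (ht : t < s) :
    bit (2 ^ s - 1 - k) t = 1 - bit k t := by
  rw [show 2 ^ s - 1 - k = 2 ^ s - (k + 1) by omega, bit_eq_toNat_testBit, bit_eq_toNat_testBit,
    Nat.testBit_two_pow_sub_succ hk]
  cases k.testBit t <;> simp [ht]

lemma bit_eq_one_of_two_pow_sub_le {s p j : ℕ} (hp : p < s) (h₁ : 2 ^ s - 2 ^ p ≤ j)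
    (h₂ : j < 2 ^ s) : bit j p = 1 := by
  have hw : 2 ^ s - 1 - j < 2 ^ p := by omega
  rw [show j = 2 ^ s - 1 - (2 ^ s - 1 - j) by omega, bit_two_pow_sub_one_sub (by omega) hp,
    bit_of_lt hw]

lemma natCast_bit_xor_two_pow (k β t : ℕ) :
    (bit (k ^^^ 2 ^ β) t : ZMod 2) = bit k t + if t = β then 1 else 0 := by
  simp only [bit_eq_toNat_testBit, Nat.testBit_xor, Nat.testBit_two_pow]
  split_ifs with h
  · subst h; cases k.testBit t <;> simp [show (1 + 1 : ZMod 2) = 0 from rfl]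
  · simp [Ne.symm h]

lemma bit_xor_two_pow_add_bit_xor_two_pow (i j β u : ℕ) :
    (bit (i ^^^ 2 ^ β) u + bit (j ^^^ 2 ^ β) u) % 2 = (bit i u + bit j u) % 2 := by
  rw [← ZMod.natCast_eq_natCast_iff']
  push_cast
  rw [natCast_bit_xor_two_pow, natCast_bit_xor_two_pow]
  have h2 : (2 : ZMod 2) = 0 := rfl
  linear_combination (if u = β then (1 : ZMod 2) else 0) * h2

lemma xor_two_pow_of_testBit_false {k β : ℕ} (h : k.testBit β = false) :
    k ^^^ 2 ^ β = k + 2 ^ β := by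
  have hQ : Even (k / 2 ^ β) := by
    rw [Nat.even_iff, ← Nat.toNat_testBit, h, Bool.toNat_false]
  have hk : k + 2 ^ β = 2 ^ β * (k / 2 ^ β ^^^ 1) + k % 2 ^ β := by
    rw [Nat.xor_one_of_even hQ]
    have := Nat.div_add_mod k (2 ^ β)
    linarith
  have hR : k % 2 ^ β < 2 ^ β := Nat.mod_lt _ (by positivity)
  apply Nat.eq_of_testBit_eq
  intro j
  conv_lhs => rw [← Nat.div_add_mod k (2 ^ β)]
  rw [hk, Nat.testBit_xor, Nat.testBit_two_pow_mul_add _ hR, Nat.testBit_two_pow_mul_add _ hR,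
    Nat.testBit_xor, Nat.testBit_two_pow]
  split_ifs with hj
  · simp [show β ≠ j by omega]
  · obtain ⟨d, rfl⟩ : ∃ d, j = β + d := ⟨j - β, by omega⟩
    cases d <;> simp [Nat.testBit_add_one]

lemma xor_two_pow_add {k τ β : ℕ} (h : k.testBit β = (k + τ).testBit β) :
    (k + τ) ^^^ 2 ^ β = (k ^^^ 2 ^ β) + τ := by
  have hdown : ∀ x, x.testBit β = true → (x ^^^ 2 ^ β) + 2 ^ β = x := fun x hx => by
    rw [← xor_two_pow_of_testBit_false (by simp [hx]), Nat.xor_assoc, Nat.xor_self, Nat.xor_zero]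
  cases hk : k.testBit β
  · rw [xor_two_pow_of_testBit_false hk, xor_two_pow_of_testBit_false (h ▸ hk)]; omega
  · have := hdown k hk
    have := hdown (k + τ) (h ▸ hk)
    omega

lemma exists_testBit_ne {s k l : ℕ} (hk : k < 2 ^ s) (hl : l < 2 ^ s) (hne : k ≠ l) :
    ∃ t < s, k.testBit t ≠ l.testBit t := by
  by_contra! h
  refine hne (Nat.eq_of_testBit_eq fun t => ?_)
  by_cases ht : t < s
  · exact h t ht
  · rw [Nat.testBit_lt_two_pow (hk.trans_le (Nat.pow_le_pow_right two_pos (by omega))),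
      Nat.testBit_lt_two_pow (hl.trans_le (Nat.pow_le_pow_right two_pos (by omega)))]

section Signs

variable {R : Type*} [Ring R]

lemma neg_one_pow_eq_of_mod_two_eq {a b : ℕ} (h : a % 2 = b % 2) : (-1 : R) ^ a = (-1) ^ b := by
  rw [neg_one_pow_eq_pow_mod_two, h, ← neg_one_pow_eq_pow_mod_two]

lemma neg_one_pow_add_neg_one_pow_eq_zero {a b : ℕ} (h : a % 2 ≠ b % 2) :
    (-1 : R) ^ a + (-1) ^ b = 0 := by
  rw [neg_one_pow_eq_of_mod_two_eq (b := b + 1) (by omega), pow_succ, mul_neg_one, neg_add_cancel]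

end Signs

lemma acorr_eq_of_eq_mul {N τ : ℕ} {x y x' y' : ℕ → ℂ} {z : ℂ} (hz : ‖z‖ = 1)
    (hx : ∀ i < N, x i = z * x' i) (hy : ∀ i < N, y i = z * y' i) :
    acorr N x y τ = acorr N x' y' τ := by
  have hzz : z * (starRingEnd ℂ) z = 1 := by
    rw [Complex.mul_conj, Complex.normSq_eq_norm_sq, hz]; norm_num
  refine sum_congr rfl fun i hi => ?_
  rw [mem_range] at hi
  rw [hx i (by omega), hy (i + τ) (by omega), map_mul]
  linear_combination x' i * (starRingEnd ℂ) (y' (i + τ)) * hzz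

lemma acorr_neg_one_pow (N τ : ℕ) (E F : ℕ → ℕ) :
    acorr N (fun i => (-1) ^ E i) (fun i => (-1) ^ F i) τ
      = ∑ i ∈ range (N - τ), (-1 : ℂ) ^ (E i + F (i + τ)) := by
  simp [acorr, pow_add]

lemma acorr_add_acorr_eq_zero_of_head_tail {N Z τ : ℕ} {x y : ℕ → ℂ}
    (hhead : ∀ i < Z, y i = x i) (htail : ∀ i, N - Z ≤ i → i < N → y i = -x i)
    (hτ : N - Z ≤ τ) :
    acorr N x x τ + acorr N y y τ = 0 ∧ acorr N x y τ + acorr N y x τ = 0 := by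
  have hterm : ∀ i < N - τ, y i = x i ∧ y (i + τ) = -x (i + τ) := fun i hi =>
    ⟨hhead i (by omega), htail (i + τ) (by omega) (by omega)⟩
  constructor <;>
  · rw [acorr, acorr, ← sum_add_distrib]
    refine sum_eq_zero fun i hi => ?_
    rw [mem_range] at hi
    rw [(hterm i hi).1, (hterm i hi).2, map_neg]
    ring

lemma omegaq_pow_half {q : ℕ} (hq : 2 ≤ q) (hq2 : 2 ∣ q) : omegaq q ^ (q / 2) = -1 := by
  obtain ⟨t, rfl⟩ := hq2
  rw [omegaq, ← Complex.exp_nat_mul, show 2 * t / 2 = t by omega]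
  have ht : (t : ℂ) ≠ 0 := Nat.cast_ne_zero.mpr (by omega)
  rw [show (t : ℂ) * (2 * Real.pi * Complex.I / ((2 * t : ℕ) : ℂ)) = Real.pi * Complex.I by
    push_cast; field_simp]
  exact Complex.exp_pi_mul_I

lemma norm_omegaq (q : ℕ) : ‖omegaq q‖ = 1 := by
  rw [omegaq, Complex.norm_exp]
  simp

lemma sum_range_mul_succ_flip_pair {L A : ℕ} (hA : A < L) {a a' : ℕ → ZMod 2}
    (hagree : ∀ r ≤ A, a r = a' r) (hdiff : a (A + 1) + a' (A + 1) = 1) :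
    ∑ r ∈ range L, ((a r + if r = A then 1 else 0) * (a (r + 1) + if r + 1 = A then 1 else 0)
        + (a' r + if r = A then 1 else 0) * (a' (r + 1) + if r + 1 = A then 1 else 0))
      = ∑ r ∈ range L, (a r * a (r + 1) + a' r * a' (r + 1)) + 1 := by
  set e : ℕ → ZMod 2 := fun r => if r = A then 1 else 0 with he
  have h2 : (2 : ZMod 2) = 0 := rfl
  have hterm : ∀ r,
      (a r + e r) * (a (r + 1) + e (r + 1)) + (a' r + e r) * (a' (r + 1) + e (r + 1))
      = (a r * a (r + 1) + a' r * a' (r + 1)) + e r * (a (r + 1) + a' (r + 1))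
        + e (r + 1) * (a r + a' r) := fun r => by
    linear_combination (e r * e (r + 1)) * h2
  have hlow : ∀ r, e (r + 1) * (a r + a' r) = 0 := fun r => by
    by_cases hr : r + 1 = A
    · rw [hagree r (by omega), CharTwo.add_self_eq_zero, mul_zero]
    · simp [e, hr]
  simp only [he] at hterm hlow
  simp only [hterm, hlow, add_zero, sum_add_distrib, ite_mul, one_mul, zero_mul, sum_ite_eq',
    mem_range, hA, if_true, hdiff]

lemma sum_range_add_one_mul_add_one (L : ℕ) (a : ℕ → ZMod 2) :
    ∑ r ∈ range L, (a r + 1) * (a (r + 1) + 1)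
      = ∑ r ∈ range L, a r * a (r + 1) + a 0 + a L + L := by
  have h2 : (2 : ZMod 2) = 0 := rfl
  have hterm : ∀ r, (a r + 1) * (a (r + 1) + 1) = a r * a (r + 1) + (a (r + 1) - a r) + 1 :=
    fun r => by linear_combination a r * h2
  rw [sum_congr rfl fun r _ => hterm r, sum_add_distrib, sum_add_distrib,
    sum_range_sub (fun r => a r), sum_const, card_range, nsmul_eq_mul, mul_one, CharTwo.sub_eq_add]
  ring

def pathForm (π : ℕ → ℕ) (L i : ℕ) : ℕ :=
  ∑ k ∈ range L, bit i (π k) * bit i (π (k + 1))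

section PathForm

variable {π : ℕ → ℕ} {L : ℕ}

lemma natCast_pathForm (i : ℕ) :
    (pathForm π L i : ZMod 2)
      = ∑ r ∈ range L, (bit i (π r) : ZMod 2) * bit i (π (r + 1)) := by
  simp [pathForm]

lemma pathForm_congr {i j : ℕ} (h : ∀ r ≤ L, bit i (π r) = bit j (π r)) :
    pathForm π L i = pathForm π L j :=
  sum_congr rfl fun r hr => by
    rw [mem_range] at hr; rw [h r hr.le, h (r + 1) hr]

lemma pathForm_zero : pathForm π L 0 = 0 := by
  simp [pathForm, bit]

lemma pathForm_two_pow (hπ : Set.InjOn π (Set.Iio (L + 1))) (p : ℕ) :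
    pathForm π L (2 ^ p) = 0 := by
  refine sum_eq_zero fun r hr => ?_
  rw [mem_range] at hr
  have hne : π r ≠ π (r + 1) := fun h => by
    have := hπ (Set.mem_Iio.mpr (by omega)) (Set.mem_Iio.mpr (by omega)) h; omega
  rw [bit_two_pow, bit_two_pow]
  split_ifs <;> simp_all

lemma pathForm_two_pow_mul_add (hπ : Set.MapsTo π (Set.Iio (L + 1)) (Set.Iio (L + 1)))
    (c : ℕ) {k : ℕ} (hk : k < 2 ^ (L + 1)) :
    pathForm π L (2 ^ (L + 1) * c + k) = pathForm π L k :=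
  pathForm_congr fun r hr => by
    rw [bit_two_pow_mul_add c hk, if_pos (show π r < L + 1 from hπ (Set.mem_Iio.mpr (by omega)))]

lemma pathForm_xor_two_pow (hπ : Set.InjOn π (Set.Iio (L + 1))) {A : ℕ} (hA : A < L) {i j : ℕ}
    (hagree : ∀ r ≤ A, bit i (π r) = bit j (π r))
    (hdiff : bit i (π (A + 1)) ≠ bit j (π (A + 1))) :
    (pathForm π L (i ^^^ 2 ^ π A) + pathForm π L (j ^^^ 2 ^ π A)) % 2
      = (pathForm π L i + pathForm π L j + 1) % 2 := by
  have hflip : ∀ k r, r ≤ L →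
      (bit (k ^^^ 2 ^ π A) (π r) : ZMod 2) = bit k (π r) + if r = A then 1 else 0 :=
    fun k r hr => by
      rw [natCast_bit_xor_two_pow]
      congr 1
      exact if_congr ⟨fun h => hπ (by simp; omega) (by simp; omega) h, fun h => h ▸ rfl⟩
        rfl rfl
  have hsum : (bit i (π (A + 1)) : ZMod 2) + bit j (π (A + 1)) = 1 := by
    have := bit_le_one i (π (A + 1))
    have := bit_le_one j (π (A + 1))
    exact_mod_cast congrArg (Nat.cast : ℕ → ZMod 2)
      (show bit i (π (A + 1)) + bit j (π (A + 1)) = 1 by omega)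
  rw [← ZMod.natCast_eq_natCast_iff']
  push_cast
  rw [natCast_pathForm, natCast_pathForm, natCast_pathForm, natCast_pathForm, ← sum_add_distrib,
    ← sum_add_distrib, ← sum_range_mul_succ_flip_pair hA (fun r hr => by rw [hagree r hr]) hsum]
  refine sum_congr rfl fun r hr => ?_
  rw [mem_range] at hr
  rw [hflip i r hr.le, hflip j r hr.le, hflip i (r + 1) hr, hflip j (r + 1) hr]

lemma pathForm_two_pow_sub_one_sub (hπ : Set.MapsTo π (Set.Iio (L + 1)) (Set.Iio (L + 1)))
    {w : ℕ} (hw : w < 2 ^ (L + 1)) :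
    pathForm π L (2 ^ (L + 1) - 1 - w) % 2
      = (pathForm π L w + bit w (π 0) + bit w (π L) + L) % 2 := by
  have hcompl : ∀ r ≤ L, (bit (2 ^ (L + 1) - 1 - w) (π r) : ZMod 2) = bit w (π r) + 1 :=
    fun r hr => by
      have hlt : π r < L + 1 := hπ (Set.mem_Iio.mpr (by omega))
      rw [bit_two_pow_sub_one_sub hw hlt]
      have := bit_le_one w (π r)
      interval_cases bit w (π r) <;> rfl
  rw [← ZMod.natCast_eq_natCast_iff']
  push_cast
  rw [natCast_pathForm, natCast_pathForm, ← sum_range_add_one_mul_add_one]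
  refine sum_congr rfl fun r hr => ?_
  rw [mem_range] at hr
  rw [hcompl r hr.le, hcompl (r + 1) hr]

end PathForm

/-- By the convention `sInf ∅ = 0`, this is `0` when the digits never differ. -/
noncomputable def firstDiff (π : ℕ → ℕ) (i j : ℕ) : ℕ :=
  sInf {v | i.testBit (π v) ≠ j.testBit (π v)}

/-- Golay's involution: flip, in `k` and hence in `k + τ`, the digit preceding the first one
along `π` at which `k` and `k + τ` differ. -/
noncomputable def golayPartner (π : ℕ → ℕ) (τ k : ℕ) : ℕ :=
  if firstDiff π k (k + τ) = 0 then k else k ^^^ 2 ^ π (firstDiff π k (k + τ) - 1)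

section Golay

variable {π : ℕ → ℕ} {L : ℕ}

lemma testBit_eq_of_lt_firstDiff {i j v : ℕ} (hv : v < firstDiff π i j) :
    i.testBit (π v) = j.testBit (π v) := by
  by_contra h
  exact Nat.notMem_of_lt_sInf hv h

lemma firstDiff_xor_two_pow (i j β : ℕ) :
    firstDiff π (i ^^^ 2 ^ β) (j ^^^ 2 ^ β) = firstDiff π i j := by
  simp [firstDiff, Nat.testBit_xor]

lemma firstDiff_spec (hπ : Set.SurjOn π (Set.Iio (L + 1)) (Set.Iio (L + 1))) {k τ : ℕ}
    (hτ : 0 < τ) (hk : k + τ < 2 ^ (L + 1)) :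
    firstDiff π k (k + τ) ≤ L ∧ k.testBit (π (firstDiff π k (k + τ)))
      ≠ (k + τ).testBit (π (firstDiff π k (k + τ))) := by
  obtain ⟨t, ht, hne⟩ := exists_testBit_ne (by omega) hk (by omega : k ≠ k + τ)
  obtain ⟨v, hv, rfl⟩ := hπ ht
  have hmem : v ∈ {v | k.testBit (π v) ≠ (k + τ).testBit (π v)} := hne
  exact ⟨(Nat.sInf_le hmem).trans (Nat.lt_succ_iff.mp hv), Nat.sInf_mem ⟨v, hmem⟩⟩

lemma golayPartner_spec (hπ : Set.BijOn π (Set.Iio (L + 1)) (Set.Iio (L + 1))) {k τ : ℕ}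
    (hτ : 0 < τ) (hk : k + τ < 2 ^ (L + 1)) (hv : firstDiff π k (k + τ) ≠ 0) :
    golayPartner π τ k + τ < 2 ^ (L + 1) ∧ golayPartner π τ k ≠ k ∧
      golayPartner π τ (golayPartner π τ k) = k ∧
      (pathForm π L (golayPartner π τ k) + pathForm π L (golayPartner π τ k + τ)) % 2
        = (pathForm π L k + pathForm π L (k + τ) + 1) % 2 ∧
      ∀ u, (bit (golayPartner π τ k) u + bit (golayPartner π τ k + τ) u) % 2
        = (bit k u + bit (k + τ) u) % 2 := by
  obtain ⟨hvL, hdiff⟩ := firstDiff_spec hπ.surjOn hτ hk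
  set v := firstDiff π k (k + τ) with hvdef
  obtain ⟨A, hA⟩ : ∃ A, v = A + 1 := ⟨v - 1, by omega⟩
  have hpartner : golayPartner π τ k = k ^^^ 2 ^ π A := by
    rw [golayPartner, ← hvdef, if_neg hv, hA, Nat.add_sub_cancel]
  have hagree : ∀ r ≤ A, k.testBit (π r) = (k + τ).testBit (π r) :=
    fun r hr => testBit_eq_of_lt_firstDiff (by omega)
  have hshift : golayPartner π τ k + τ = (k + τ) ^^^ 2 ^ π A := by
    rw [hpartner, xor_two_pow_add (hagree A le_rfl)]
  have hβ : π A < L + 1 := hπ.mapsTo (Set.mem_Iio.mpr (by omega))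
  refine ⟨?_, ?_, ?_, ?_,
    fun u => by rw [hshift, hpartner, bit_xor_two_pow_add_bit_xor_two_pow]⟩
  · rw [hshift]
    exact Nat.xor_lt_two_pow hk (Nat.pow_lt_pow_right one_lt_two hβ)
  · rw [hpartner]
    intro h
    have := congrArg (fun x => x ^^^ k) h
    simp [Nat.xor_comm k] at this
  · rw [golayPartner, hshift, hpartner, firstDiff_xor_two_pow, ← hvdef, if_neg hv, hA,
      Nat.add_sub_cancel, Nat.xor_assoc, Nat.xor_self, Nat.xor_zero]
  · rw [hshift, hpartner]
    refine pathForm_xor_two_pow hπ.injOn (by omega)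
      (fun r hr => bit_eq_bit_iff.mpr (hagree r hr)) ?_
    rw [Ne, bit_eq_bit_iff, ← hA]
    exact hdiff

theorem sum_neg_one_pow_pathForm_quad_eq_zero
    (hπ : Set.BijOn π (Set.Iio (L + 1)) (Set.Iio (L + 1))) {τ : ℕ} (hτ : 0 < τ) (t : ℕ) :
    ∑ k ∈ range (2 ^ (L + 1) - τ), (-1 : ℂ) ^ (pathForm π L k + pathForm π L (k + τ)) *
      ((1 + (-1) ^ (bit k (π 0) + bit (k + τ) (π 0))) * (1 + (-1) ^ (bit k t + bit (k + τ) t)))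
      = 0 := by
  set f : ℕ → ℂ := fun k => (-1 : ℂ) ^ (pathForm π L k + pathForm π L (k + τ)) *
      ((1 + (-1) ^ (bit k (π 0) + bit (k + τ) (π 0))) * (1 + (-1) ^ (bit k t + bit (k + τ) t)))
  change ∑ k ∈ range (2 ^ (L + 1) - τ), f k = 0
  have hzero : ∀ k, k + τ < 2 ^ (L + 1) → firstDiff π k (k + τ) = 0 → f k = 0 := by
    intro k hk hv
    have hdiff := (firstDiff_spec hπ.surjOn hτ hk).2
    rw [hv, Ne, ← bit_eq_bit_iff] at hdiff
    have := bit_le_one k (π 0)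
    have := bit_le_one (k + τ) (π 0)
    have hW : (1 : ℂ) + (-1) ^ (bit k (π 0) + bit (k + τ) (π 0)) = 0 := by
      simpa using neg_one_pow_add_neg_one_pow_eq_zero (R := ℂ) (a := 0) (by omega)
    simp only [f, hW, zero_mul, mul_zero]
  have hmem : ∀ {k}, k ∈ range (2 ^ (L + 1) - τ) ↔ k + τ < 2 ^ (L + 1) := by
    simp only [mem_range]; omega
  refine sum_involution (fun k _ => golayPartner π τ k) (fun k hk => ?_) (fun k hk hfk => ?_)
    (fun k hk => ?_) (fun k hk => ?_) <;> rw [hmem] at hk <;>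
    by_cases hv : firstDiff π k (k + τ) = 0
  · rw [show golayPartner π τ k = k by simp [golayPartner, hv], hzero k hk hv, add_zero]
  · obtain ⟨-, -, -, hP, hbits⟩ := golayPartner_spec hπ hτ hk hv
    simp only [f]
    rw [neg_one_pow_eq_of_mod_two_eq hP, pow_succ, neg_one_pow_eq_of_mod_two_eq (hbits (π 0)),
      neg_one_pow_eq_of_mod_two_eq (hbits t)]
    ring
  · exact absurd (hzero k hk hv) hfk
  · exact (golayPartner_spec hπ hτ hk hv).2.1
  · simpa [golayPartner, hv, hmem] using hk
  · exact hmem.mpr (golayPartner_spec hπ hτ hk hv).1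
  · simp [golayPartner, hv]
  · exact (golayPartner_spec hπ hτ hk hv).2.2.1

end Golay

lemma sum_range_split_blocks {M : Type*} [AddCommMonoid M] (f : ℕ → M) {n τ : ℕ}
    (hτ : τ ≤ n) :
    ∑ i ∈ range (2 * n + 2 - τ), f i = (f 0 + f (2 * n + 1 - τ))
      + ∑ k ∈ range (n - τ), (f (1 + k) + f (n + 1 + k))
      + ∑ k ∈ range τ, f (n + 1 - τ + k) := by
  rw [show 2 * n + 2 - τ = 1 + (n - τ) + τ + (n - τ) + 1 by omega, sum_range_succ,
    sum_range_add, sum_range_add, sum_range_add, sum_range_one, sum_add_distrib,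
    show 1 + (n - τ) + τ + (n - τ) = 2 * n + 1 - τ by omega]
  have hB : ∀ k, 1 + (n - τ) + τ + k = n + 1 + k := fun k => by omega
  have hC : ∀ k, 1 + (n - τ) + k = n + 1 - τ + k := fun k => by omega
  simp only [hB]
  simp only [hC]
  abel

/-- The exponents of the `±1` sequence `(1, (-1)^u 0, …, (-1)^u (n-1), (-1)^v 0, …,
(-1)^v (n-1), (-1)^last)` of length `2 n + 2`. -/
def blockExp (n : ℕ) (u v : ℕ → ℕ) (last i : ℕ) : ℕ :=
  if i = 0 then 0 else if i ≤ n then u (i - 1) else if i ≤ 2 * n then v (i - (n + 1)) else last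

section BlockExp

variable {n : ℕ} {u v : ℕ → ℕ} {last : ℕ}

@[simp] lemma blockExp_zero : blockExp n u v last 0 = 0 := rfl

lemma blockExp_one_add {k : ℕ} (hk : k < n) : blockExp n u v last (1 + k) = u k := by
  rw [blockExp, if_neg (by omega), if_pos (by omega)]; congr 1; omega

lemma blockExp_add_one_add {k : ℕ} (hk : k < n) : blockExp n u v last (n + 1 + k) = v k := by
  rw [blockExp, if_neg (by omega), if_neg (by omega), if_pos (by omega)]; congr 1; omega

lemma blockExp_two_mul_add_one : blockExp n u v last (2 * n + 1) = last := by
  rw [blockExp, if_neg (by omega), if_neg (by omega), if_neg (by omega)]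

end BlockExp

/-- With `m = L + 3`, the `i`-th entries of `Ψ_{2^{m-2}-1}(G₁)` and `Ψ_{2^{m-2}-1}(G₂)` are
`ω^c (-1)^(psiExp₁ π L i)` and `ω^c (-1)^(psiExp₂ π L i)` (see `psiExp_window`). -/
def psiExp₁ (π : ℕ → ℕ) (L : ℕ) : ℕ → ℕ :=
  blockExp (2 ^ (L + 1)) (pathForm π L) (fun k => pathForm π L k + bit k (π 0) + (L + 1)) 1

def psiExp₂ (π : ℕ → ℕ) (L : ℕ) : ℕ → ℕ :=
  blockExp (2 ^ (L + 1)) (fun k => pathForm π L k + bit k (π L))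
    (fun k => pathForm π L k + bit k (π 0) + (L + 1) + bit k (π L)) 0

def psiTerm (π : ℕ → ℕ) (L τ i : ℕ) : ℂ :=
  (-1) ^ (psiExp₁ π L i + psiExp₁ π L (i + τ))
    + (-1) ^ (psiExp₂ π L i + psiExp₂ π L (i + τ))

section Window

variable {π : ℕ → ℕ} {L : ℕ}

lemma exists_window_decomposition {s i : ℕ} (hi : i < 2 * 2 ^ s + 2) :
    ∃ c k, k < 2 ^ s ∧ i + (2 ^ s - 1) = 2 ^ s * c + k ∧
      (c = 0 ∧ i = 0 ∧ k = 2 ^ s - 1 ∨ c = 1 ∧ i = 1 + k ∨ c = 2 ∧ i = 2 ^ s + 1 + k ∨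
        c = 3 ∧ i = 2 * 2 ^ s + 1 ∧ k = 0) := by
  have : 0 < 2 ^ s := by positivity
  rcases (by omega : i = 0 ∨ 1 ≤ i ∧ i ≤ 2 ^ s ∨ 2 ^ s + 1 ≤ i ∧ i ≤ 2 * 2 ^ s ∨
    i = 2 * 2 ^ s + 1) with h | h | h | h
  · exact ⟨0, 2 ^ s - 1, by omega, by omega, Or.inl ⟨rfl, h, rfl⟩⟩
  · exact ⟨1, i - 1, by omega, by omega, Or.inr (Or.inl ⟨rfl, by omega⟩)⟩
  · exact ⟨2, i - (2 ^ s + 1), by omega, by omega,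
      Or.inr (Or.inr (Or.inl ⟨rfl, by omega⟩))⟩
  · exact ⟨3, 0, by omega, by omega, Or.inr (Or.inr (Or.inr ⟨rfl, h, rfl⟩))⟩

lemma psiExp_window (hπ : Set.MapsTo π (Set.Iio (L + 1)) (Set.Iio (L + 1))) {i j : ℕ}
    (hi : i < 2 * 2 ^ (L + 1) + 2) (hj : i + (2 ^ (L + 1) - 1) = j) :
    psiExp₁ π L i = (1 - bit j (L + 2)) * bit j (L + 1) * pathForm π L j
        + bit j (L + 2) * (1 - bit j (L + 1)) * (pathForm π L j + bit j (π 0) + (L + 1))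
        + bit j (L + 2) * bit j (L + 1) ∧
      psiExp₂ π L i = (1 - bit j (L + 2)) * bit j (L + 1) * pathForm π L j
        + bit j (L + 2) * (1 - bit j (L + 1)) * (pathForm π L j + bit j (π 0) + (L + 1))
        + bit j (π L) * (bit j (L + 2) + bit j (L + 1)) := by
  obtain ⟨c, k, hk, hjck, hcases⟩ := exists_window_decomposition hi
  rw [hj] at hjck
  subst hjck
  have hlow : ∀ r ≤ L, bit (2 ^ (L + 1) * c + k) (π r) = bit k (π r) := fun r hr => by
    rw [bit_two_pow_mul_add c hk, if_pos (show π r < L + 1 from hπ (Set.mem_Iio.mpr (by omega)))]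
  rw [pathForm_two_pow_mul_add hπ c hk, hlow 0 (Nat.zero_le _), hlow L le_rfl,
    bit_two_pow_mul_add c hk (L + 1), bit_two_pow_mul_add c hk (L + 2), if_neg (by omega),
    if_neg (by omega), show L + 1 - (L + 1) = 0 by omega, show L + 2 - (L + 1) = 1 by omega]
  rcases hcases with ⟨rfl, rfl, rfl⟩ | ⟨rfl, rfl⟩ | ⟨rfl, rfl⟩ | ⟨rfl, rfl, rfl⟩
  · simp [psiExp₁, psiExp₂, bit]
  · simp [psiExp₁, psiExp₂, bit, blockExp_one_add hk]
  · simp [psiExp₁, psiExp₂, bit, blockExp_add_one_add hk]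
  · simp [psiExp₁, psiExp₂, bit, blockExp_two_mul_add_one]

end Window

section Psi

variable {π : ℕ → ℕ} {L τ : ℕ}

lemma psiExp₂_eq_psiExp₁_of_le {i : ℕ} (hi : i ≤ 2 ^ π L) (hp : π L < L + 1) :
    psiExp₂ π L i = psiExp₁ π L i := by
  have hpn : 2 ^ π L < 2 ^ (L + 1) := Nat.pow_lt_pow_right one_lt_two hp
  rcases Nat.eq_zero_or_pos i with rfl | hi₀
  · rfl
  obtain ⟨k, rfl⟩ : ∃ k, i = 1 + k := ⟨i - 1, by omega⟩
  simp only [psiExp₁, psiExp₂, blockExp_one_add (by omega : k < 2 ^ (L + 1)),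
    bit_of_lt (by omega : k < 2 ^ π L), add_zero]

lemma neg_one_pow_psiExp₂_of_ge {i : ℕ} (hi₁ : 2 * 2 ^ (L + 1) + 1 - 2 ^ π L ≤ i)
    (hi₂ : i ≤ 2 * 2 ^ (L + 1) + 1) (hp : π L < L + 1) :
    (-1 : ℂ) ^ psiExp₂ π L i = -(-1) ^ psiExp₁ π L i := by
  have hpn : 2 ^ π L < 2 ^ (L + 1) := Nat.pow_lt_pow_right one_lt_two hp
  rcases (by omega : i = 2 * 2 ^ (L + 1) + 1 ∨ i < 2 * 2 ^ (L + 1) + 1) with rfl | hi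
  · simp [psiExp₁, psiExp₂, blockExp_two_mul_add_one]
  obtain ⟨k, rfl⟩ : ∃ k, i = 2 ^ (L + 1) + 1 + k := ⟨i - (2 ^ (L + 1) + 1), by omega⟩
  simp only [psiExp₁, psiExp₂, blockExp_add_one_add (by omega : k < 2 ^ (L + 1)),
    bit_eq_one_of_two_pow_sub_le hp (by omega) (by omega : k < 2 ^ (L + 1))]
  rw [pow_succ (-1 : ℂ), mul_neg_one]

lemma psiTerm_within_blocks {k : ℕ} (hk : k + τ < 2 ^ (L + 1)) :
    psiTerm π L τ (1 + k) + psiTerm π L τ (2 ^ (L + 1) + 1 + k)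
      = (-1) ^ (pathForm π L k + pathForm π L (k + τ)) *
        ((1 + (-1) ^ (bit k (π 0) + bit (k + τ) (π 0))) *
          (1 + (-1) ^ (bit k (π L) + bit (k + τ) (π L)))) := by
  have hk' : k < 2 ^ (L + 1) := by omega
  simp only [psiTerm, psiExp₁, psiExp₂, add_assoc 1 k τ, add_assoc (2 ^ (L + 1) + 1) k τ,
    blockExp_one_add hk, blockExp_one_add hk', blockExp_add_one_add hk, blockExp_add_one_add hk']
  simp only [pow_add]
  rcases neg_one_pow_eq_or ℂ L with h | h <;> simp only [h] <;> ring

lemma psiTerm_boundary (hπ : Set.MapsTo π (Set.Iio (L + 1)) (Set.Iio (L + 1)))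
    (hτ₁ : 1 ≤ τ) (hτ : τ ≤ 2 ^ (L + 1)) :
    psiTerm π L τ 0 + psiTerm π L τ (2 * 2 ^ (L + 1) + 1 - τ) = 0 := by
  obtain ⟨w, rfl⟩ : ∃ w, τ = 1 + w := ⟨τ - 1, by omega⟩
  have hw : w < 2 ^ (L + 1) := by omega
  have hP := pathForm_two_pow_sub_one_sub hπ hw
  set c := 2 ^ (L + 1) - 1 - w
  have hc : c < 2 ^ (L + 1) := by omega
  have hcompl : ∀ r ≤ L, bit c (π r) = 1 - bit w (π r) := fun r hr =>
    bit_two_pow_sub_one_sub hw (hπ (Set.mem_Iio.mpr (by omega)))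
  have h₀ := hcompl 0 (by omega)
  have hₗ := hcompl L le_rfl
  have := bit_le_one w (π 0)
  have := bit_le_one w (π L)
  simp only [psiTerm]
  rw [show 2 * 2 ^ (L + 1) + 1 - (1 + w) = 2 ^ (L + 1) + 1 + c by omega,
    show 2 ^ (L + 1) + 1 + c + (1 + w) = 2 * 2 ^ (L + 1) + 1 by omega]
  simp only [psiExp₁, psiExp₂, zero_add, blockExp_zero, blockExp_one_add hw,
    blockExp_add_one_add hc, blockExp_two_mul_add_one, add_zero]
  rw [neg_one_pow_eq_of_mod_two_eq (a := pathForm π L c + bit c (π 0) + (L + 1) + 1)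
      (b := pathForm π L w + bit w (π L) + 1) (by omega),
    neg_one_pow_eq_of_mod_two_eq (a := pathForm π L c + bit c (π 0) + (L + 1) + bit c (π L))
      (b := pathForm π L w + 1) (by omega)]
  ring

lemma psiTerm_across_blocks {k : ℕ} (hk : k < τ) (hτ : τ ≤ 2 ^ (L + 1)) :
    psiTerm π L τ (2 ^ (L + 1) + 1 - τ + k)
      = (-1) ^ (pathForm π L (2 ^ (L + 1) - τ + k) + (pathForm π L k + bit k (π 0) + (L + 1))) *
        (1 + (-1) ^ (bit (2 ^ (L + 1) - τ + k) (π L) + bit k (π L))) := by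
  simp only [psiTerm]
  rw [show 2 ^ (L + 1) + 1 - τ + k = 1 + (2 ^ (L + 1) - τ + k) by omega,
    show 1 + (2 ^ (L + 1) - τ + k) + τ = 2 ^ (L + 1) + 1 + k by omega]
  simp only [psiExp₁, psiExp₂, blockExp_one_add (by omega : 2 ^ (L + 1) - τ + k < 2 ^ (L + 1)),
    blockExp_add_one_add (by omega : k < 2 ^ (L + 1))]
  simp only [pow_add]
  ring

lemma psiTerm_across_blocks_eq_zero (hp : π L < L + 1) {k : ℕ} (hk : k < τ)
    (hτ : τ ≤ 2 ^ (L + 1)) (hkp : k < 2 ^ π L)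
    (hj : 2 ^ (L + 1) - 2 ^ π L ≤ 2 ^ (L + 1) - τ + k) :
    psiTerm π L τ (2 ^ (L + 1) + 1 - τ + k) = 0 := by
  rw [psiTerm_across_blocks hk hτ, bit_eq_one_of_two_pow_sub_le hp hj (by omega), bit_of_lt hkp]
  norm_num

lemma psiTerm_across_blocks_ends (hπ : Set.BijOn π (Set.Iio (L + 1)) (Set.Iio (L + 1)))
    (hL : 1 ≤ L) :
    psiTerm π L (2 ^ π L + 1) (2 ^ (L + 1) + 1 - (2 ^ π L + 1) + 0)
      + psiTerm π L (2 ^ π L + 1) (2 ^ (L + 1) + 1 - (2 ^ π L + 1) + 2 ^ π L) = 0 := by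
  have hp : π L < L + 1 := hπ.mapsTo (Set.mem_Iio.mpr (by omega))
  have hpn : 2 ^ π L * 2 ≤ 2 ^ (L + 1) := by
    rw [← pow_succ]; exact Nat.pow_le_pow_right two_pos hp
  have : 0 < 2 ^ π L := by positivity
  have hinj : π 0 ≠ π L := fun h => by
    have := hπ.injOn (Set.mem_Iio.mpr (by omega)) (Set.mem_Iio.mpr (by omega)) h; omega
  have hP₀ := pathForm_two_pow_sub_one_sub hπ.mapsTo (by positivity : 0 < 2 ^ (L + 1))
  have hPp := pathForm_two_pow_sub_one_sub hπ.mapsTo (by omega : 2 ^ π L < 2 ^ (L + 1))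
  rw [pathForm_zero, bit_of_lt (by positivity), bit_of_lt (by positivity)] at hP₀
  rw [pathForm_two_pow hπ.injOn, bit_two_pow, bit_two_pow, if_pos rfl, if_neg hinj] at hPp
  rw [psiTerm_across_blocks (by omega) (by omega), psiTerm_across_blocks (by omega) (by omega),
    show 2 ^ (L + 1) - (2 ^ π L + 1) + 0 = 2 ^ (L + 1) - 1 - 2 ^ π L by omega,
    show 2 ^ (L + 1) - (2 ^ π L + 1) + 2 ^ π L = 2 ^ (L + 1) - 1 - 0 by omega,
    bit_two_pow_sub_one_sub (by omega) hp, bit_two_pow_sub_one_sub (by omega) hp,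
    pathForm_zero, pathForm_two_pow hπ.injOn, bit_two_pow, bit_two_pow, if_pos rfl, if_neg hinj,
    bit_of_lt (by positivity : 0 < 2 ^ π L), bit_of_lt (by positivity : 0 < 2 ^ π 0)]
  have hcancel := neg_one_pow_add_neg_one_pow_eq_zero (R := ℂ)
    (a := pathForm π L (2 ^ (L + 1) - 1 - 2 ^ π L) + (0 + 0 + (L + 1)))
    (b := pathForm π L (2 ^ (L + 1) - 1 - 0) + (0 + 0 + (L + 1))) (by omega)
  norm_num at hcancel ⊢
  linear_combination 2 * hcancel

lemma sum_psiTerm_across_blocks_eq_zero (hπ : Set.BijOn π (Set.Iio (L + 1)) (Set.Iio (L + 1)))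
    (hL : 1 ≤ L) (hτ₁ : 1 ≤ τ) (hτ : τ ≤ 2 ^ π L + 1) :
    ∑ k ∈ range τ, psiTerm π L τ (2 ^ (L + 1) + 1 - τ + k) = 0 := by
  have hp : π L < L + 1 := hπ.mapsTo (Set.mem_Iio.mpr (by omega))
  have hτn : τ ≤ 2 ^ (L + 1) := by
    have : 2 ^ π L * 2 ≤ 2 ^ (L + 1) := by
      rw [← pow_succ]; exact Nat.pow_le_pow_right two_pos hp
    have : 0 < 2 ^ π L := by positivity
    omega
  rcases (by omega : τ ≤ 2 ^ π L ∨ τ = 2 ^ π L + 1) with hτp | rfl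
  · refine sum_eq_zero fun k hk => ?_
    rw [mem_range] at hk
    exact psiTerm_across_blocks_eq_zero hp hk hτn (by omega) (by omega)
  rw [sum_eq_add_of_mem 0 (2 ^ π L) (by simp) (by simp) (by positivity) fun k hk hk' => ?_,
    psiTerm_across_blocks_ends hπ hL]
  rw [mem_range] at hk
  exact psiTerm_across_blocks_eq_zero hp hk hτn (by omega) (by omega)

theorem sum_psiTerm_eq_zero (hπ : Set.BijOn π (Set.Iio (L + 1)) (Set.Iio (L + 1)))
    (hL : 1 ≤ L) (hτ₁ : 1 ≤ τ) (hτ : τ ≤ 2 ^ π L + 1) :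
    ∑ i ∈ range (2 * 2 ^ (L + 1) + 2 - τ), psiTerm π L τ i = 0 := by
  have hp : π L < L + 1 := hπ.mapsTo (Set.mem_Iio.mpr (by omega))
  have hτn : τ ≤ 2 ^ (L + 1) := by
    have := Nat.pow_lt_pow_right one_lt_two hp; omega
  rw [sum_range_split_blocks _ hτn, psiTerm_boundary hπ.mapsTo hτ₁ hτn,
    sum_psiTerm_across_blocks_eq_zero hπ hL hτ₁ hτ, zero_add, add_zero,
    ← sum_neg_one_pow_pathForm_quad_eq_zero hπ hτ₁ (π L)]
  refine sum_congr rfl fun k hk => ?_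
  rw [mem_range] at hk
  exact psiTerm_within_blocks (by omega)


section Shifts

variable {π : ℕ → ℕ} {L τ : ℕ}

theorem acorr_psi_add_acorr_psi_eq_zero_of_le
    (hπ : Set.BijOn π (Set.Iio (L + 1)) (Set.Iio (L + 1))) (hL : 1 ≤ L) (hτ₁ : 1 ≤ τ)
    (hτ : τ ≤ 2 ^ π L + 1) :
    acorr (2 * 2 ^ (L + 1) + 2) (fun i => (-1) ^ psiExp₁ π L i)
        (fun i => (-1) ^ psiExp₁ π L i) τ
      + acorr (2 * 2 ^ (L + 1) + 2) (fun i => (-1) ^ psiExp₂ π L i)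
          (fun i => (-1) ^ psiExp₂ π L i) τ = 0 := by
  rw [acorr_neg_one_pow, acorr_neg_one_pow, ← sum_add_distrib]
  exact sum_psiTerm_eq_zero hπ hL hτ₁ hτ

theorem acorr_psi_eq_zero_of_ge (hp : π L < L + 1)
    (hτ : 2 * 2 ^ (L + 1) + 2 - (2 ^ π L + 1) ≤ τ) :
    acorr (2 * 2 ^ (L + 1) + 2) (fun i => (-1) ^ psiExp₁ π L i)
        (fun i => (-1) ^ psiExp₁ π L i) τ
        + acorr (2 * 2 ^ (L + 1) + 2) (fun i => (-1) ^ psiExp₂ π L i)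
          (fun i => (-1) ^ psiExp₂ π L i) τ = 0 ∧
      acorr (2 * 2 ^ (L + 1) + 2) (fun i => (-1) ^ psiExp₁ π L i)
          (fun i => (-1) ^ psiExp₂ π L i) τ
        + acorr (2 * 2 ^ (L + 1) + 2) (fun i => (-1) ^ psiExp₂ π L i)
          (fun i => (-1) ^ psiExp₁ π L i) τ = 0 :=
  acorr_add_acorr_eq_zero_of_head_tail
    (fun i hi => by simp only [psiExp₂_eq_psiExp₁_of_le (by omega : i ≤ 2 ^ π L) hp])
    (fun _ hi₁ hi₂ => neg_one_pow_psiExp₂_of_ge (by omega) (by omega) hp) hτ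

end Shifts

/-- Lemma 2: (Ψ_{2^{m−2}−1}(G₁), Ψ_{2^{m−2}−1}(G₂)) is a
(2^{m−1}+2, 2^{π(m−3)}+1)-CZCP. -/
theorem stmt_5 (q m c : ℕ) (hq : 2 ≤ q) (hq2 : 2 ∣ q) (hm : 4 ≤ m)
    (π : ℕ → ℕ) (hπ : Set.BijOn π (Set.Iio (m - 2)) (Set.Iio (m - 2)))
    (g G G₁ G₂ : ℕ → ℕ)
    (hg : ∀ i, g i = ∑ k ∈ Finset.range (m - 3), bit i (π k) * bit i (π (k + 1)))
    (hG : ∀ i, G i = q / 2 * ((1 - bit i (m - 1)) * bit i (m - 2) * g i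
        + bit i (m - 1) * (1 - bit i (m - 2)) * (g i + bit i (π 0) + (m - 2))) + c)
    (hG₁ : ∀ i, G₁ i = G i + q / 2 * (bit i (m - 1) * bit i (m - 2)))
    (hG₂ : ∀ i, G₂ i = G i + q / 2 * (bit i (π (m - 3)) * (bit i (m - 1) + bit i (m - 2))))
    (a b : ℕ → ℂ)
    (ha : ∀ i, a i = omegaq q ^ G₁ (i + (2 ^ (m - 2) - 1)))
    (hb : ∀ i, b i = omegaq q ^ G₂ (i + (2 ^ (m - 2) - 1))) :
    (∀ τ : ℕ, (1 ≤ τ ∧ τ ≤ 2 ^ π (m - 3) + 1) ∨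
        (2 ^ (m - 1) + 2 - (2 ^ π (m - 3) + 1) ≤ τ ∧ τ ≤ 2 ^ (m - 1) + 1) →
      acorr (2 ^ (m - 1) + 2) a a τ + acorr (2 ^ (m - 1) + 2) b b τ = 0) ∧
    (∀ τ : ℕ, 2 ^ (m - 1) + 2 - (2 ^ π (m - 3) + 1) ≤ τ → τ ≤ 2 ^ (m - 1) + 1 →
      acorr (2 ^ (m - 1) + 2) a b τ + acorr (2 ^ (m - 1) + 2) b a τ = 0) := by
  obtain ⟨L, rfl⟩ : ∃ L, m = L + 3 := ⟨m - 3, by omega⟩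
  simp only [show L + 3 - 1 = L + 2 from rfl, show L + 3 - 2 = L + 1 from rfl,
    show L + 3 - 3 = L from rfl, show 2 ^ (L + 2) = 2 * 2 ^ (L + 1) by ring] at *
  obtain rfl : g = pathForm π L := funext hg
  have hω : ∀ e, omegaq q ^ (q / 2 * e + c) = omegaq q ^ c * (-1) ^ e := fun e => by
    rw [pow_add, pow_mul, omegaq_pow_half hq hq2, mul_comm]
  have hωc : ‖omegaq q ^ c‖ = 1 := by rw [norm_pow, norm_omegaq, one_pow]
  have ha' : ∀ i < 2 * 2 ^ (L + 1) + 2, a i = omegaq q ^ c * (-1) ^ psiExp₁ π L i :=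
    fun i hi => by
      rw [ha, hG₁, hG, (psiExp_window hπ.mapsTo hi rfl).1, ← hω]; ring_nf
  have hb' : ∀ i < 2 * 2 ^ (L + 1) + 2, b i = omegaq q ^ c * (-1) ^ psiExp₂ π L i :=
    fun i hi => by
      rw [hb, hG₂, hG, (psiExp_window hπ.mapsTo hi rfl).2, ← hω]; ring_nf
  have hp : π L < L + 1 := hπ.mapsTo (Set.mem_Iio.mpr (by omega))
  refine ⟨fun τ hτ => ?_, fun τ hτ _ => ?_⟩
  · rw [acorr_eq_of_eq_mul hωc ha' ha', acorr_eq_of_eq_mul hωc hb' hb']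
    rcases hτ with ⟨hτ₁, hτ₂⟩ | ⟨hτ, -⟩
    · exact acorr_psi_add_acorr_psi_eq_zero_of_le hπ (by omega) hτ₁ hτ₂
    · exact (acorr_psi_eq_zero_of_ge hp hτ).1
  · rw [acorr_eq_of_eq_mul hωc ha' hb', acorr_eq_of_eq_mul hωc hb' ha']
    exact (acorr_psi_eq_zero_of_ge hp hτ).2
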